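/- Suppose b = b_k,…,b_0 is a colour witness for ρ, d = φ(v_{m+1}) is even, the set {i : b_i ≠ ⊥ and b_i < d} is nonempty with maximum j, and b_j is odd. Define c by: for all i ≥ j, c_i = d if b_i ≠ ⊥ and b_i < d, and c_i = b_i otherwise; c_i = ⊥ for all i with 0 < i < j; and c_0 = d. Then c is a colour witness for ρ' = v_1,…,v_m,v_{m+1}. -/

import Mathlib

open scoped Classical

/-- Membership in `C⁻`, where `C = {lo,…,hi}`: everything of `C` except `hi` when `hi` is odd. -/
def CminusMem (lo hi c : ℕ) : Prop := lo ≤ c ∧ c ≤ hi ∧ (Even hi ∨ c ≠ hi)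

/-- The index of the first position of an `i`-colour-witness: `1` if the colour `i` is even
and `0` if it is odd. -/
def startIdx (i : ℕ) : ℕ := if Even i then 1 else 0

variable {V : Type*}

/-- `p`, on indices `startIdx i, …, len`, is an `i`-colour-witness of length `len` for the
play prefix `v_1,…,v_m`: strictly increasing positions, all but the final one of even colour,
the final one of colour `i`, with inner domination and outer domination by `i`. -/
def IsCWit (φ : V → ℕ) (v : ℕ → V) (m i len : ℕ) (p : ℕ → ℕ) : Prop :=
  1 ≤ len ∧
  (∀ j, startIdx i ≤ j → j ≤ len → 1 ≤ p j ∧ p j ≤ m) ∧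
  (∀ j, startIdx i ≤ j → j < len → p j < p (j + 1)) ∧
  (∀ j, startIdx i ≤ j → j < len → Even (φ (v (p j)))) ∧
  φ (v (p len)) = i ∧
  (∀ j, startIdx i ≤ j → j < len → ∀ t, p j ≤ t → t ≤ p (j + 1) →
      φ (v t) ≤ max (φ (v (p j))) (φ (v (p (j + 1))))) ∧
  (∀ t, p len ≤ t → t ≤ m → φ (v t) ≤ i)

/-- The colour `c` occurs among the entries `b_0,…,b_k` of `b`. -/
def occursIn (k : ℕ) (b : ℕ → Option ℕ) (c : ℕ) : Prop := ∃ p ≤ k, b p = some c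

/-- `unblk(i,b)`: the colours `j` occurring in `b` with `i ≤ j < odd(i,b)`, where `odd(i,b)`
is the least odd colour strictly greater than `i` occurring in `b` (`∞` if none). -/
noncomputable def unblkF (hi k : ℕ) (b : ℕ → Option ℕ) (i : ℕ) : Finset ℕ :=
  (Finset.range (hi + 1)).filter fun j =>
    occursIn k b j ∧ i ≤ j ∧ ∀ o, Odd o → i < o → o ≤ j → ¬ occursIn k b o

/-- `ubp(i,b)`: the positions of `b` whose entry is a colour of `unblk(i,b)`. -/
noncomputable def ubpF (hi k : ℕ) (b : ℕ → Option ℕ) (i : ℕ) : Finset ℕ :=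
  (Finset.range (k + 1)).filter fun p => ∃ c, b p = some c ∧ c ∈ unblkF hi k b i

/-- `b = b_k,…,b_0` is a colour witness for the play prefix `v_1,…,v_m`, for the colouring
`φ` into `C = {lo,…,hi}`. -/
def IsColourWitness (lo hi : ℕ) (φ : V → ℕ) (v : ℕ → V) (m k : ℕ)
    (b : ℕ → Option ℕ) : Prop :=
  (∀ p ≤ k, ∀ c, b p = some c → CminusMem lo hi c) ∧
  -- order
  (∀ i j, j < i → i ≤ k → ∀ ci cj, b i = some ci → b j = some cj → cj ≤ ci) ∧
  -- conciseness
  (∀ o, Odd o → ∀ i j, i ≤ k → j ≤ k → i ≠ j → b i = some o → ¬ b j = some o) ∧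
  (∀ c, b 0 = some c → ¬ Odd c) ∧
  -- the family of colour witnesses
  ∃ (ℓ : ℕ → ℕ) (P : ℕ → ℕ → ℕ),
    (∀ i, occursIn k b i → IsCWit φ v m i (ℓ i) (P i)) ∧
    -- ordered witnesses
    (∀ i j, occursIn k b i → occursIn k b j → j < i → P i (ℓ i) < P j (startIdx j)) ∧
    -- length constraints
    (∀ i, CminusMem lo hi i → (∑ p ∈ ubpF hi k b i, 2 ^ p) ≤ ∑ j ∈ unblkF hi k b i, ℓ j)

/-!
Below position `j` all entries of `b` are colours at most `c₀ = b_j`, above `j` they are colours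
at least `d`; so `c` keeps `b` above `j` and puts `d` at the positions `j` and `0`. The witnesses
of the colours above `d` stay witnesses for `ρ'`, since `d` does not exceed them. The new
`d`-witness is the old one (if `d` occurs in `b`), followed by the `c₀`-witness without its final
odd position, followed by `m + 1`: its length grows by `ℓ_{c₀} + 1`. Because no colour strictly
between `c₀` and `d` occurs in `b`, `unblk(c₀, b) = {c₀} ∪ unblk(d, b)`, so the length constraint
of `b` at `c₀` reads `2^j + Σ_{ubp(d,b)} 2^p ≤ ℓ_{c₀} + Σ_{unblk(d,b)} ℓ`. For `i ≤ d` we have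
`unblk(i, c) = {d} ∪ unblk(d, b)` and `ubp(i, c) ⊆ {0, j} ∪ ubp(d, b)`, so the extra cost
`1 + 2^j` is paid by the extra length `ℓ_{c₀} + 1`; above `d` nothing changes.
-/

open Finset

theorem CminusMem.of_even {lo hi c : ℕ} (hlo : lo ≤ c) (hhi : c ≤ hi) (hc : Even c) :
    CminusMem lo hi c :=
  ⟨hlo, hhi, (Nat.even_or_odd hi).imp_right fun hodd h => Nat.not_even_iff_odd.2 hodd (h ▸ hc)⟩

theorem startIdx_of_even {i : ℕ} (h : Even i) : startIdx i = 1 := if_pos h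

theorem startIdx_of_odd {i : ℕ} (h : Odd i) : startIdx i = 0 := if_neg (Nat.not_even_iff_odd.2 h)

def InnerDominated (φ : V → ℕ) (v : ℕ → V) (x y : ℕ) : Prop :=
  ∀ t, x ≤ t → t ≤ y → φ (v t) ≤ max (φ (v x)) (φ (v y))

theorem InnerDominated.trans {φ : V → ℕ} {v : ℕ → V} {x y z : ℕ}
    (hxy : InnerDominated φ v x y) (hyz : InnerDominated φ v y z) (h : φ (v y) ≤ φ (v z)) :
    InnerDominated φ v x z := by
  intro t hxt htz
  rcases le_total t y with hty | hyt
  · exact (hxy t hxt hty).trans (max_le_max le_rfl h)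
  · exact (hyz t hyt htz).trans (by simp [h])

def IsEvenChain (φ : V → ℕ) (v : ℕ → V) (M : ℕ) (p : ℕ → ℕ) (a n : ℕ) : Prop :=
  (∀ t, a ≤ t → t ≤ n → 1 ≤ p t ∧ p t ≤ M) ∧
  ∀ t, a ≤ t → t < n →
    p t < p (t + 1) ∧ Even (φ (v (p t))) ∧ InnerDominated φ v (p t) (p (t + 1))

section Chains

variable {φ : V → ℕ} {v : ℕ → V} {M : ℕ} {p q : ℕ → ℕ} {a n : ℕ}

theorem isCWit_iff {i len : ℕ} :
    IsCWit φ v M i len p ↔ 1 ≤ len ∧ IsEvenChain φ v M p (startIdx i) len ∧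
      φ (v (p len)) = i ∧ ∀ t, p len ≤ t → t ≤ M → φ (v t) ≤ i := by
  constructor
  · rintro ⟨hlen, hbd, hlt, hev, hlast, hdom, hout⟩
    exact ⟨hlen, ⟨hbd, fun t ha hn => ⟨hlt t ha hn, hev t ha hn, hdom t ha hn⟩⟩, hlast, hout⟩
  · rintro ⟨hlen, ⟨hbd, hstep⟩, hlast, hout⟩
    exact ⟨hlen, hbd, fun t ha hn => (hstep t ha hn).1, fun t ha hn => (hstep t ha hn).2.1,
      hlast, fun t ha hn => (hstep t ha hn).2.2, hout⟩

theorem IsEvenChain.mono {M' : ℕ} (h : IsEvenChain φ v M p a n) (hM : M ≤ M') :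
    IsEvenChain φ v M' p a n :=
  ⟨fun t ha hn => ⟨(h.1 t ha hn).1, (h.1 t ha hn).2.trans hM⟩, h.2⟩

theorem IsEvenChain.of_le {n' : ℕ} (h : IsEvenChain φ v M p a n) (hn : n' ≤ n) :
    IsEvenChain φ v M p a n' :=
  ⟨fun t ha ht => h.1 t ha (ht.trans hn), fun t ha ht => h.2 t ha (ht.trans_le hn)⟩

theorem IsEvenChain.shift (h : IsEvenChain φ v M p a n) (s : ℕ) :
    IsEvenChain φ v M (fun t => p (t - s)) (a + s) (n + s) := by
  refine ⟨fun t ha hn => h.1 (t - s) (by omega) (by omega), fun t ha hn => ?_⟩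
  have hts : t + 1 - s = t - s + 1 := by omega
  simpa only [hts] using h.2 (t - s) (by omega) (by omega)

theorem isEvenChain_single (h1 : 1 ≤ p n) (hM : p n ≤ M) : IsEvenChain φ v M p n n :=
  ⟨fun t ht ht' => le_antisymm ht' ht ▸ ⟨h1, hM⟩, fun t ht ht' => absurd ht' (by omega)⟩

theorem IsEvenChain.glue {n' : ℕ} (hp : IsEvenChain φ v M p a n)
    (hq : IsEvenChain φ v M q (n + 1) n') (han : a ≤ n) (hlt : p n < q (n + 1))
    (heven : Even (φ (v (p n)))) (hdom : InnerDominated φ v (p n) (q (n + 1))) :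
    IsEvenChain φ v M (fun t => if t ≤ n then p t else q t) a n' := by
  refine ⟨fun t ha ht => ?_, fun t ha ht => ?_⟩
  · by_cases htn : t ≤ n
    · simpa only [if_pos htn] using hp.1 t ha htn
    · simpa only [if_neg htn] using hq.1 t (by omega) ht
  · rcases lt_trichotomy t n with htn | rfl | htn
    · simpa only [if_pos htn.le, if_pos (show t + 1 ≤ n by omega)] using hp.2 t ha htn
    · simpa only [le_rfl, if_true, show ¬ t + 1 ≤ t by omega, if_false] using
        ⟨hlt, heven, hdom⟩
    · simpa only [if_neg (show ¬ t ≤ n by omega), if_neg (show ¬ t + 1 ≤ n by omega)] using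
        hq.2 t (by omega) ht

end Chains

section Witnesses

variable {φ : V → ℕ} {v : ℕ → V} {m : ℕ} {P : ℕ → ℕ}

theorem IsCWit.extend {i len : ℕ} (h : IsCWit φ v m i len P) (hlast : φ (v (m + 1)) ≤ i) :
    IsCWit φ v (m + 1) i len P := by
  obtain ⟨hlen, hchain, hfin, hout⟩ := isCWit_iff.1 h
  refine isCWit_iff.2 ⟨hlen, hchain.mono m.le_succ, hfin, fun t ht htm => ?_⟩
  rcases Nat.lt_or_ge t (m + 1) with htm' | htm'
  · exact hout t ht (by omega)
  · rwa [show t = m + 1 by omega]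

/-- The final, odd, position of the `c`-witness is dropped. -/
theorem IsCWit.odd_snoc {c L : ℕ} (h : IsCWit φ v m c L P) (hc : Odd c)
    (hd : Even (φ (v (m + 1)))) (hcd : c ≤ φ (v (m + 1))) :
    IsCWit φ v (m + 1) (φ (v (m + 1))) (L + 1)
      (fun t => if t ≤ L then P (t - 1) else m + 1) := by
  obtain ⟨hL, hchain, hfin, hout⟩ := isCWit_iff.1 h
  rw [startIdx_of_odd hc] at hchain
  have hstep := hchain.2 (L - 1) (Nat.zero_le _) (by omega)
  rw [Nat.sub_add_cancel hL] at hstep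
  have hlast : InnerDominated φ v (P L) (m + 1) := by
    intro t ht htm
    rcases Nat.lt_or_ge t (m + 1) with htm' | htm'
    · exact (hout t ht (by omega)).trans (hcd.trans (le_max_right _ _))
    · rw [show t = m + 1 by omega]
      exact le_max_right _ _
  have hhead : IsEvenChain φ v (m + 1) (fun t => P (t - 1)) 1 L := by
    simpa only [Nat.sub_add_cancel hL] using
      ((hchain.of_le (Nat.sub_le L 1)).shift 1).mono m.le_succ
  refine isCWit_iff.2 ⟨by omega, ?_, by simp, fun t ht htm => ?_⟩
  · rw [startIdx_of_even hd]
    refine hhead.glue (isEvenChain_single (by omega) le_rfl) hL ?_ hstep.2.1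
      (hstep.2.2.trans hlast (hfin ▸ hcd))
    simpa using (hchain.1 (L - 1) (Nat.zero_le _) (by omega)).2
  · simp only [show ¬ L + 1 ≤ L by omega, if_false] at ht
    rw [show t = m + 1 by omega]

theorem IsCWit.append {d D L M : ℕ} {Q : ℕ → ℕ} (hP : IsCWit φ v m d D P)
    (hQ : IsCWit φ v M d L Q) (hd : Even d) (hmM : m ≤ M) (hlt : P D < Q 1) (hQm : Q 1 ≤ m) :
    IsCWit φ v M d (D + L) (fun t => if t ≤ D then P t else Q (t - D)) := by
  obtain ⟨hD, hPchain, hPfin, hPout⟩ := isCWit_iff.1 hP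
  obtain ⟨hL, hQchain, hQfin, hQout⟩ := isCWit_iff.1 hQ
  rw [startIdx_of_even hd] at hPchain hQchain
  have hdom : InnerDominated φ v (P D) (Q 1) := fun t ht ht' =>
    (hPout t ht (ht'.trans hQm)).trans (hPfin ▸ le_max_left _ _)
  have hQshift : IsEvenChain φ v M (fun t => Q (t - D)) (D + 1) (D + L) := by
    simpa only [add_comm] using hQchain.shift D
  refine isCWit_iff.2 ⟨by omega, ?_, ?_, fun t ht htM => ?_⟩
  · rw [startIdx_of_even hd]
    exact (hPchain.mono hmM).glue hQshift hD (by simpa using hlt) (hPfin ▸ hd)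
      (by simpa using hdom)
  · simpa only [show ¬ D + L ≤ D by omega, if_false, Nat.add_sub_cancel_left] using hQfin
  · simp only [show ¬ D + L ≤ D by omega, if_false, Nat.add_sub_cancel_left] at ht
    exact hQout t ht htM

end Witnesses

theorem sum_insert_le_add {ι M : Type*} [DecidableEq ι] [AddCommMonoid M] [PartialOrder M]
    [CanonicallyOrderedAdd M] (a : ι) (s : Finset ι) (f : ι → M) :
    ∑ x ∈ insert a s, f x ≤ f a + ∑ x ∈ s, f x := by
  by_cases ha : a ∈ s
  · rw [insert_eq_of_mem ha]
    exact le_add_self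
  · rw [sum_insert ha]

section Unblocked

variable {hi k : ℕ} {b b' : ℕ → Option ℕ} {i x p : ℕ}

theorem mem_unblkF : x ∈ unblkF hi k b i ↔
    x ≤ hi ∧ occursIn k b x ∧ i ≤ x ∧ ∀ o, Odd o → i < o → o ≤ x → ¬ occursIn k b o := by
  simp only [unblkF, mem_filter, mem_range, Nat.lt_succ_iff]

theorem mem_ubpF : p ∈ ubpF hi k b i ↔ p ≤ k ∧ ∃ c, b p = some c ∧ c ∈ unblkF hi k b i := by
  simp only [ubpF, mem_filter, mem_range, Nat.lt_succ_iff]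

theorem unblkF_congr (h : ∀ x, i ≤ x → (occursIn k b x ↔ occursIn k b' x)) :
    unblkF hi k b i = unblkF hi k b' i := by
  ext x
  simp only [mem_unblkF]
  constructor
  · rintro ⟨hx, hocc, hix, hblk⟩
    exact ⟨hx, (h x hix).1 hocc, hix, fun o ho hio hox hocc' => hblk o ho hio hox
      ((h o hio.le).2 hocc')⟩
  · rintro ⟨hx, hocc, hix, hblk⟩
    exact ⟨hx, (h x hix).2 hocc, hix, fun o ho hio hox hocc' => hblk o ho hio hox
      ((h o hio.le).1 hocc')⟩

theorem ubpF_congr (hU : unblkF hi k b' i = unblkF hi k b i)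
    (h : ∀ p ≤ k, ∀ x ∈ unblkF hi k b i, b' p = some x ↔ b p = some x) :
    ubpF hi k b' i = ubpF hi k b i := by
  ext p
  simp only [mem_ubpF, hU]
  exact and_congr_right fun hp => exists_congr fun x =>
    ⟨fun ⟨hx, hU⟩ => ⟨(h p hp x hU).1 hx, hU⟩, fun ⟨hx, hU⟩ => ⟨(h p hp x hU).2 hx, hU⟩⟩

theorem ubpF_mono {i' : ℕ} (h : unblkF hi k b i ⊆ unblkF hi k b i') :
    ubpF hi k b i ⊆ ubpF hi k b i' := fun p hp => by
  obtain ⟨hpk, c, hc, hcU⟩ := mem_ubpF.1 hp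
  exact mem_ubpF.2 ⟨hpk, c, hc, h hcU⟩

theorem unblkF_eq_insert_of_gap {a d : ℕ} (hgap : ∀ x, occursIn k b x → x ≤ a ∨ d ≤ x)
    (had : a < d) (hd : Even d) (ha : occursIn k b a) (hahi : a ≤ hi) :
    unblkF hi k b a = insert a (unblkF hi k b d) := by
  ext x
  simp only [mem_insert, mem_unblkF]
  constructor
  · rintro ⟨hx, hocc, hax, hblk⟩
    rcases hax.eq_or_lt with rfl | hax
    · exact Or.inl rfl
    · have hdx : d ≤ x := (hgap x hocc).resolve_left (by omega)
      exact Or.inr ⟨hx, hocc, hdx, fun o ho hdo => hblk o ho (by omega)⟩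
  · rintro (rfl | ⟨hx, hocc, hdx, hblk⟩)
    · exact ⟨hahi, ha, le_rfl, fun o _ hao hoa => absurd hoa (by omega)⟩
    · refine ⟨hx, hocc, by omega, fun o ho hao hox hocc' => ?_⟩
      have hdo : d ≤ o := (hgap o hocc').resolve_left (by omega)
      have hdo' : d ≠ o := fun h => Nat.not_even_iff_odd.2 ho (h ▸ hd)
      exact hblk o ho (by omega) hox hocc'

theorem unblkF_eq_insert_of_occursIn_iff {d : ℕ}
    (h : ∀ x, occursIn k b' x ↔ x = d ∨ (occursIn k b x ∧ d ≤ x))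
    (hd : Even d) (hdhi : d ≤ hi) (hid : i ≤ d) :
    unblkF hi k b' i = insert d (unblkF hi k b d) := by
  have hodd : ∀ o, Odd o → occursIn k b' o → d < o ∧ occursIn k b o := fun o ho hocc => by
    have hod : o ≠ d := fun h => Nat.not_even_iff_odd.2 ho (h ▸ hd)
    obtain ⟨hocc, hdo⟩ := ((h o).1 hocc).resolve_left hod
    exact ⟨lt_of_le_of_ne hdo (Ne.symm hod), hocc⟩
  ext x
  simp only [mem_insert, mem_unblkF]
  constructor
  · rintro ⟨hx, hocc, -, hblk⟩
    refine ((h x).1 hocc).imp id fun ⟨hocc, hdx⟩ => ⟨hx, hocc, hdx, fun o ho hdo hox hocc' => ?_⟩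
    exact hblk o ho (by omega) hox ((h o).2 (Or.inr ⟨hocc', by omega⟩))
  · rintro (rfl | ⟨hx, hocc, hdx, hblk⟩)
    · exact ⟨hdhi, (h x).2 (Or.inl rfl), hid, fun o ho _ hox hocc =>
        absurd hox (not_le.2 (hodd o ho hocc).1)⟩
    · exact ⟨hx, (h x).2 (Or.inr ⟨hocc, hdx⟩), by omega, fun o ho _ hox hocc =>
        hblk o ho (hodd o ho hocc).1 hox (hodd o ho hocc).2⟩

theorem sum_unblkF_le (ℓ : ℕ → ℕ) (i d : ℕ) :
    ∑ x ∈ unblkF hi k b i, ℓ x ≤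
      (if occursIn k b d then ℓ d else 0) + ∑ x ∈ unblkF hi k b i \ {d}, ℓ x := by
  by_cases hdU : d ∈ unblkF hi k b i
  · rw [sum_eq_add_sum_sdiff_singleton_of_mem hdU, if_pos (mem_unblkF.1 hdU).2.1]
  · rw [sdiff_singleton_eq_erase, erase_eq_of_notMem hdU]
    exact le_add_self

end Unblocked

structure SplitsAt (k : ℕ) (b : ℕ → Option ℕ) (j c₀ d : ℕ) : Prop where
  le : j ≤ k
  apply_eq : b j = some c₀
  lt : c₀ < d
  split : ∀ p ≤ k, ∀ x, b p = some x → (p ≤ j ∧ x ≤ c₀) ∨ (j < p ∧ d ≤ x)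

def evenUpdate (b : ℕ → Option ℕ) (j d : ℕ) : ℕ → Option ℕ := fun i =>
  if j ≤ i then (if ∃ c, b i = some c ∧ c < d then some d else b i)
  else if i = 0 then some d else none

namespace SplitsAt

variable {k : ℕ} {b : ℕ → Option ℕ} {j c₀ d : ℕ}

theorem of_order
    (hord : ∀ i j, j < i → i ≤ k → ∀ ci cj, b i = some ci → b j = some cj → cj ≤ ci)
    (hj : j ≤ k) (hbj : b j = some c₀) (hc₀d : c₀ < d)
    (hmax : ∀ i, j < i → i ≤ k → ¬ ∃ c, b i = some c ∧ c < d) : SplitsAt k b j c₀ d := by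
  refine ⟨hj, hbj, hc₀d, fun p hp x hx => ?_⟩
  rcases lt_trichotomy p j with hpj | rfl | hpj
  · exact Or.inl ⟨hpj.le, hord j p hpj hj c₀ x hbj hx⟩
  · exact Or.inl ⟨le_rfl, (Option.some.inj (hbj.symm.trans hx)).ge⟩
  · exact Or.inr ⟨hpj, not_lt.1 fun hxd => hmax p hpj hp ⟨x, hx, hxd⟩⟩

theorem occursIn_gap (hs : SplitsAt k b j c₀ d) {x : ℕ} (hx : occursIn k b x) :
    x ≤ c₀ ∨ d ≤ x := by
  obtain ⟨p, hp, hpx⟩ := hx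
  exact (hs.split p hp x hpx).imp And.right And.right

theorem evenUpdate_eq_some (hs : SplitsAt k b j c₀ d) {p x : ℕ} (hp : p ≤ k) :
    evenUpdate b j d p = some x ↔ (x = d ∧ (p = 0 ∨ p = j)) ∨ (j < p ∧ b p = some x) := by
  obtain ⟨-, hbj, hc₀d, hsplit⟩ := hs
  unfold evenUpdate
  rcases lt_trichotomy p j with hpj | rfl | hpj
  · rcases Nat.eq_zero_or_pos p with rfl | hp0
    · simp [hpj.ne', eq_comm]
    · simp [not_le.2 hpj, hp0.ne', hpj.ne, not_lt.2 hpj.le]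
  · simp [hbj, hc₀d, eq_comm]
  · have hnot : ¬ ∃ c, b p = some c ∧ c < d := fun ⟨c, hc, hcd⟩ => by
      have := hsplit p hp c hc
      omega
    simp [hpj, hpj.le, hpj.ne', hnot, show p ≠ 0 by omega]

theorem evenUpdate_zero (hs : SplitsAt k b j c₀ d) : evenUpdate b j d 0 = some d :=
  (hs.evenUpdate_eq_some (Nat.zero_le k)).2 (Or.inl ⟨rfl, Or.inl rfl⟩)

theorem le_of_evenUpdate_eq_some (hs : SplitsAt k b j c₀ d) {p x : ℕ} (hp : p ≤ k)
    (hx : evenUpdate b j d p = some x) : d ≤ x := by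
  rcases (hs.evenUpdate_eq_some hp).1 hx with ⟨rfl, -⟩ | ⟨hpj, hbp⟩
  · exact le_rfl
  · have := hs.split p hp x hbp
    omega

theorem occursIn_evenUpdate (hs : SplitsAt k b j c₀ d) {x : ℕ} :
    occursIn k (evenUpdate b j d) x ↔ x = d ∨ (occursIn k b x ∧ d ≤ x) := by
  constructor
  · rintro ⟨p, hp, hpx⟩
    refine ((hs.evenUpdate_eq_some hp).1 hpx).imp And.left fun ⟨_, hbp⟩ => ?_
    exact ⟨⟨p, hp, hbp⟩, hs.le_of_evenUpdate_eq_some hp hpx⟩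
  · rintro (rfl | ⟨⟨p, hp, hbp⟩, hdx⟩)
    · exact ⟨0, Nat.zero_le k, hs.evenUpdate_zero⟩
    · have hpj : j < p := by
        have := hs.split p hp x hbp
        have := hs.lt
        omega
      exact ⟨p, hp, (hs.evenUpdate_eq_some hp).2 (Or.inr ⟨hpj, hbp⟩)⟩

section Lengths

variable {hi i : ℕ}

theorem unblkF_evenUpdate_of_lt (hs : SplitsAt k b j c₀ d) (hdi : d < i) :
    unblkF hi k (evenUpdate b j d) i = unblkF hi k b i :=
  unblkF_congr fun x hix => by
    rw [hs.occursIn_evenUpdate]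
    exact ⟨fun h => (h.resolve_left (by omega)).1, fun h => Or.inr ⟨h, by omega⟩⟩

theorem ubpF_evenUpdate_of_lt (hs : SplitsAt k b j c₀ d) (hdi : d < i) :
    ubpF hi k (evenUpdate b j d) i = ubpF hi k b i := by
  refine ubpF_congr (hs.unblkF_evenUpdate_of_lt hdi) fun p hp x hx => ?_
  have hdx : d < x := hdi.trans_le (mem_unblkF.1 hx).2.2.1
  rw [hs.evenUpdate_eq_some hp]
  refine ⟨fun h => (h.resolve_left fun h' => by omega).2, fun hbp => Or.inr ⟨?_, hbp⟩⟩
  have := hs.split p hp x hbp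
  have := hs.lt
  omega

theorem ubpF_evenUpdate_subset (hs : SplitsAt k b j c₀ d) (hdhi : d ≤ hi) (hd : Even d)
    (hid : i ≤ d) : ubpF hi k (evenUpdate b j d) i ⊆ insert 0 (insert j (ubpF hi k b d)) := by
  intro p hp
  obtain ⟨hpk, x, hpx, hxU⟩ := mem_ubpF.1 hp
  rw [unblkF_eq_insert_of_occursIn_iff (fun _ => hs.occursIn_evenUpdate) hd hdhi hid,
    mem_insert] at hxU
  rcases (hs.evenUpdate_eq_some hpk).1 hpx with ⟨-, hp0 | rfl⟩ | ⟨-, hbp⟩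
  · exact hp0 ▸ mem_insert_self _ _
  · exact mem_insert_of_mem (mem_insert_self _ _)
  · refine mem_insert_of_mem (mem_insert_of_mem (mem_ubpF.2 ⟨hpk, x, hbp, ?_⟩))
    rcases hxU with rfl | hxU
    · exact mem_unblkF.2 ⟨hdhi, ⟨p, hpk, hbp⟩, le_rfl, fun o _ hdo hod => absurd hod (by omega)⟩
    · exact hxU

theorem sum_ubpF_le (hs : SplitsAt k b j c₀ d) (hd : Even d) (hc₀hi : c₀ ≤ hi) {ℓ : ℕ → ℕ}
    (hLen : ∑ p ∈ ubpF hi k b c₀, 2 ^ p ≤ ∑ x ∈ unblkF hi k b c₀, ℓ x) :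
    2 ^ j + ∑ p ∈ ubpF hi k b d, 2 ^ p ≤ ℓ c₀ + ∑ x ∈ unblkF hi k b d, ℓ x := by
  have hU : unblkF hi k b c₀ = insert c₀ (unblkF hi k b d) :=
    unblkF_eq_insert_of_gap (fun _ => hs.occursIn_gap) hs.lt hd ⟨j, hs.le, hs.apply_eq⟩ hc₀hi
  have hc₀U : c₀ ∉ unblkF hi k b d := fun h => (mem_unblkF.1 h).2.2.1.not_gt hs.lt
  have hjT : j ∉ ubpF hi k b d := fun h => by
    obtain ⟨-, x, hx, hxU⟩ := mem_ubpF.1 h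
    rw [hs.apply_eq, Option.some.injEq] at hx
    exact hc₀U (hx ▸ hxU)
  have hsub : insert j (ubpF hi k b d) ⊆ ubpF hi k b c₀ :=
    insert_subset (mem_ubpF.2 ⟨hs.le, c₀, hs.apply_eq, hU ▸ mem_insert_self _ _⟩)
      (ubpF_mono (hU ▸ subset_insert _ _))
  calc 2 ^ j + ∑ p ∈ ubpF hi k b d, 2 ^ p = ∑ p ∈ insert j (ubpF hi k b d), 2 ^ p :=
        (sum_insert hjT).symm
    _ ≤ ∑ p ∈ ubpF hi k b c₀, 2 ^ p := sum_le_sum_of_subset hsub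
    _ ≤ ∑ x ∈ unblkF hi k b c₀, ℓ x := hLen
    _ = ℓ c₀ + ∑ x ∈ unblkF hi k b d, ℓ x := by rw [hU, sum_insert hc₀U]

theorem evenUpdate_lengths {lo : ℕ} {ℓ : ℕ → ℕ} (hs : SplitsAt k b j c₀ d)
    (hd : CminusMem lo hi d) (hdeven : Even d) (hc₀ : CminusMem lo hi c₀)
    (hLen : ∀ i, CminusMem lo hi i → ∑ p ∈ ubpF hi k b i, 2 ^ p ≤ ∑ x ∈ unblkF hi k b i, ℓ x)
    (hiC : CminusMem lo hi i) :
    ∑ p ∈ ubpF hi k (evenUpdate b j d) i, 2 ^ p ≤ ∑ x ∈ unblkF hi k (evenUpdate b j d) i,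
      Function.update ℓ d ((if occursIn k b d then ℓ d else 0) + (ℓ c₀ + 1)) x := by
  rcases lt_or_ge d i with hdi | hid
  · rw [hs.ubpF_evenUpdate_of_lt hdi, hs.unblkF_evenUpdate_of_lt hdi]
    refine (hLen i hiC).trans_eq (sum_congr rfl fun x hx => ?_)
    have := (mem_unblkF.1 hx).2.2.1
    rw [Function.update_of_ne (by omega)]
  have hT := hs.sum_ubpF_le hdeven hc₀.2.1 (hLen c₀ hc₀)
  have hD := sum_unblkF_le (hi := hi) (k := k) (b := b) ℓ d d
  calc ∑ p ∈ ubpF hi k (evenUpdate b j d) i, 2 ^ p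
        ≤ ∑ p ∈ insert 0 (insert j (ubpF hi k b d)), 2 ^ p :=
        sum_le_sum_of_subset (hs.ubpF_evenUpdate_subset hd.2.1 hdeven hid)
    _ ≤ 2 ^ 0 + (2 ^ j + ∑ p ∈ ubpF hi k b d, 2 ^ p) :=
        (sum_insert_le_add _ _ _).trans (Nat.add_le_add_left (sum_insert_le_add _ _ _) _)
    _ ≤ (if occursIn k b d then ℓ d else 0) + (ℓ c₀ + 1) + ∑ x ∈ unblkF hi k b d \ {d}, ℓ x := by
        rw [pow_zero]
        omega
    _ = ∑ x ∈ insert d (unblkF hi k b d), Function.update ℓ d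
          ((if occursIn k b d then ℓ d else 0) + (ℓ c₀ + 1)) x := by
        rw [sum_update_of_mem (mem_insert_self _ _), insert_sdiff_of_mem _ (mem_singleton_self d)]
    _ = _ := by
        rw [unblkF_eq_insert_of_occursIn_iff (fun _ => hs.occursIn_evenUpdate) hdeven hd.2.1 hid]

end Lengths

theorem evenUpdate_order (hs : SplitsAt k b j c₀ d)
    (hord : ∀ i j, j < i → i ≤ k → ∀ ci cj, b i = some ci → b j = some cj → cj ≤ ci) :
    ∀ i j', j' < i → i ≤ k → ∀ ci cj, evenUpdate b j d i = some ci →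
      evenUpdate b j d j' = some cj → cj ≤ ci := by
  intro i j' hji hik ci cj hci hcj
  rcases (hs.evenUpdate_eq_some (hji.le.trans hik)).1 hcj with ⟨rfl, -⟩ | ⟨hjj', hbj'⟩
  · exact hs.le_of_evenUpdate_eq_some hik hci
  · rcases (hs.evenUpdate_eq_some hik).1 hci with ⟨-, hi0 | hij⟩ | ⟨-, hbi⟩
    · omega
    · omega
    · exact hord i j' hji hik ci cj hbi hbj'

theorem evenUpdate_concise (hs : SplitsAt k b j c₀ d) (hd : Even d)
    (hconc : ∀ o, Odd o → ∀ i j, i ≤ k → j ≤ k → i ≠ j → b i = some o → ¬ b j = some o) :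
    ∀ o, Odd o → ∀ i j', i ≤ k → j' ≤ k → i ≠ j' → evenUpdate b j d i = some o →
      ¬ evenUpdate b j d j' = some o := by
  intro o ho i j' hik hjk hij hi hj
  have hod : o ≠ d := fun h => Nat.not_even_iff_odd.2 ho (h ▸ hd)
  exact hconc o ho i j' hik hjk hij (((hs.evenUpdate_eq_some hik).1 hi).resolve_left
    (fun h => hod h.1)).2 (((hs.evenUpdate_eq_some hjk).1 hj).resolve_left (fun h => hod h.1)).2

variable {φ : V → ℕ} {v : ℕ → V} {m : ℕ} {ℓ : ℕ → ℕ} {P : ℕ → ℕ → ℕ}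

theorem exists_evenWitness (hs : SplitsAt k b j c₀ (φ (v (m + 1)))) (hc₀ : Odd c₀)
    (hd : Even (φ (v (m + 1))))
    (hWit : ∀ x, occursIn k b x → IsCWit φ v m x (ℓ x) (P x))
    (hOrd : ∀ x y, occursIn k b x → occursIn k b y → y < x → P x (ℓ x) < P y (startIdx y)) :
    ∃ Q, IsCWit φ v (m + 1) (φ (v (m + 1)))
        ((if occursIn k b (φ (v (m + 1))) then ℓ (φ (v (m + 1))) else 0) + (ℓ c₀ + 1)) Q ∧
      ∀ x, occursIn k b x → φ (v (m + 1)) < x → P x (ℓ x) < Q 1 := by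
  have hc₀occ : occursIn k b c₀ := ⟨j, hs.le, hs.apply_eq⟩
  have hc₀wit := hWit c₀ hc₀occ
  have hRfirst : (if 1 ≤ ℓ c₀ then P c₀ (1 - 1) else m + 1) = P c₀ 0 := if_pos hc₀wit.1
  have hc₀first : P c₀ 0 ≤ m := (hc₀wit.2.1 0 (startIdx_of_odd hc₀).le (Nat.zero_le _)).2
  have hc₀ord : ∀ x, occursIn k b x → c₀ < x → P x (ℓ x) < P c₀ 0 := fun x hx hcx => by
    simpa only [startIdx_of_odd hc₀] using hOrd x c₀ hx hc₀occ hcx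
  have hR := hc₀wit.odd_snoc hc₀ hd hs.lt.le
  by_cases hdocc : occursIn k b (φ (v (m + 1)))
  · have hdwit := hWit _ hdocc
    have hQ := hdwit.append hR hd m.le_succ (by simpa only [hRfirst] using hc₀ord _ hdocc hs.lt)
      (by simpa only [hRfirst] using hc₀first)
    refine ⟨_, by simpa only [if_pos hdocc] using hQ, fun x hx hdx => ?_⟩
    simpa only [if_pos hdwit.1, startIdx_of_even hd] using hOrd x _ hx hdocc hdx
  · refine ⟨_, by simpa only [if_neg hdocc, zero_add] using hR, fun x hx hdx => ?_⟩
    simpa only [hRfirst] using hc₀ord x hx (hs.lt.trans hdx)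

theorem evenUpdate_witnesses (hs : SplitsAt k b j c₀ (φ (v (m + 1))))
    (hWit : ∀ x, occursIn k b x → IsCWit φ v m x (ℓ x) (P x)) {L : ℕ} {Q : ℕ → ℕ}
    (hQ : IsCWit φ v (m + 1) (φ (v (m + 1))) L Q) :
    ∀ x, occursIn k (evenUpdate b j (φ (v (m + 1)))) x →
      IsCWit φ v (m + 1) x (Function.update ℓ (φ (v (m + 1))) L x)
        (Function.update P (φ (v (m + 1))) Q x) := by
  intro x hx
  by_cases hxd : x = φ (v (m + 1))
  · subst hxd
    simpa only [Function.update_self] using hQ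
  · obtain ⟨hxb, hdx⟩ := (hs.occursIn_evenUpdate.1 hx).resolve_left hxd
    simpa only [Function.update_of_ne hxd] using (hWit x hxb).extend hdx

theorem evenUpdate_ordered (hs : SplitsAt k b j c₀ (φ (v (m + 1))))
    (hd : Even (φ (v (m + 1))))
    (hOrd : ∀ x y, occursIn k b x → occursIn k b y → y < x → P x (ℓ x) < P y (startIdx y))
    {L : ℕ} {Q : ℕ → ℕ} (hQ : ∀ x, occursIn k b x → φ (v (m + 1)) < x → P x (ℓ x) < Q 1) :
    ∀ x y, occursIn k (evenUpdate b j (φ (v (m + 1)))) x →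
      occursIn k (evenUpdate b j (φ (v (m + 1)))) y → y < x →
      Function.update P (φ (v (m + 1))) Q x (Function.update ℓ (φ (v (m + 1))) L x) <
        Function.update P (φ (v (m + 1))) Q y (startIdx y) := by
  intro x y hx hy hyx
  rw [hs.occursIn_evenUpdate] at hx hy
  have hdy : φ (v (m + 1)) ≤ y := hy.elim ge_of_eq And.right
  have hxd : x ≠ φ (v (m + 1)) := by omega
  obtain ⟨hxb, -⟩ := hx.resolve_left hxd
  simp only [Function.update_of_ne hxd]
  by_cases hyd : y = φ (v (m + 1))
  · subst hyd
    simpa only [Function.update_self, startIdx_of_even hd] using hQ x hxb hyx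
  · simpa only [Function.update_of_ne hyd] using hOrd x y hxb (hy.resolve_left hyd).1 hyx

end SplitsAt

theorem colour_witness_update_even_local_general (lo hi : ℕ)
    (φ : V → ℕ) (hφ : ∀ x, φ x ∈ Set.Icc lo hi) (v : ℕ → V) (m : ℕ)
    (k : ℕ) (b : ℕ → Option ℕ) (hb : IsColourWitness lo hi φ v m k b)
    (hdeven : Even (φ (v (m + 1))))
    (j : ℕ) (hj : j ≤ k)
    (hatj : ∃ c, b j = some c ∧ c < φ (v (m + 1)) ∧ Odd c)
    (hmax : ∀ i, j < i → i ≤ k → ¬ ∃ c, b i = some c ∧ c < φ (v (m + 1))) :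
    IsColourWitness lo hi φ v (m + 1) k
      (fun i => if j ≤ i then
                  (if ∃ c, b i = some c ∧ c < φ (v (m + 1)) then some (φ (v (m + 1))) else b i)
                else if i = 0 then some (φ (v (m + 1))) else none) := by
  show IsColourWitness lo hi φ v (m + 1) k (evenUpdate b j (φ (v (m + 1))))
  obtain ⟨hmem, hord, hconc, -, ℓ, P, hWit, hOrd, hLen⟩ := hb
  obtain ⟨c₀, hbj, hc₀d, hc₀odd⟩ := hatj
  have hs : SplitsAt k b j c₀ (φ (v (m + 1))) := SplitsAt.of_order hord hj hbj hc₀d hmax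
  have hdmem : CminusMem lo hi (φ (v (m + 1))) := .of_even (hφ _).1 (hφ _).2 hdeven
  obtain ⟨Q, hQ, hQfirst⟩ := hs.exists_evenWitness hc₀odd hdeven hWit hOrd
  refine ⟨fun p hp x hx => ?_, hs.evenUpdate_order hord, hs.evenUpdate_concise hdeven hconc,
    fun x hx => ?_, _, _, hs.evenUpdate_witnesses hWit hQ,
    hs.evenUpdate_ordered hdeven hOrd hQfirst,
    fun i hi => hs.evenUpdate_lengths hdmem hdeven (hmem j hj c₀ hbj) hLen hi⟩
  · rcases (hs.evenUpdate_eq_some hp).1 hx with ⟨rfl, -⟩ | ⟨-, hbp⟩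
    · exact hdmem
    · exact hmem p hp x hbp
  · rw [hs.evenUpdate_zero, Option.some.injEq] at hx
    exact Nat.not_odd_iff_even.2 (hx ▸ hdeven)

/-- Local update lemma for an even colour `d = φ(v_{m+1})`, when the greatest index `j` whose
entry is a colour `< d` carries an odd colour: setting, for `i ≥ j`, `c_i = d` if
`b_i ≠ ⊥` and `b_i < d` and `c_i = b_i` otherwise, `c_i = ⊥` for `0 < i < j`, and `c_0 = d`,
yields a colour witness for `ρ' = v_1,…,v_m,v_{m+1}`. -/
theorem colour_witness_update_even_local (lo hi : ℕ) (hlo : lo = 1 ∨ lo = 2) (hlohi : lo ≤ hi)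
    (φ : V → ℕ) (hφ : ∀ x, φ x ∈ Set.Icc lo hi) (v : ℕ → V) (m : ℕ) (hm : 1 ≤ m)
    (k : ℕ) (b : ℕ → Option ℕ) (hb : IsColourWitness lo hi φ v m k b)
    (hdeven : Even (φ (v (m + 1))))
    (j : ℕ) (hj : j ≤ k)
    (hatj : ∃ c, b j = some c ∧ c < φ (v (m + 1)) ∧ Odd c)
    (hmax : ∀ i, j < i → i ≤ k → ¬ ∃ c, b i = some c ∧ c < φ (v (m + 1))) :
    IsColourWitness lo hi φ v (m + 1) k
      (fun i => if j ≤ i then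
                  (if ∃ c, b i = some c ∧ c < φ (v (m + 1)) then some (φ (v (m + 1))) else b i)
                else if i = 0 then some (φ (v (m + 1))) else none) :=
  colour_witness_update_even_local_general lo hi φ hφ v m k b hb hdeven j hj hatj hmax
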